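/- The coloured independence polynomial of the leafy star L_n satisfies C(L_n; x, x_1, ..., x_n) = (x+1)^n · (x + ∏_{i=1}^n (x + x_i + 1)), where x is the variable of all bound (black) vertices and x_i are the variables of the n free coloured vertices. -/

import Mathlib

/-!
An independent set of `L_n` either contains the centre, and then meets each branch at most in its
pendant leaf, which gives `x (x + 1)^n`; or it avoids the centre, and then it is an arbitrary
choice of independent sets in the `n` disjoint branches, each a leaf (`1 + x`) next to an edge
from the middle vertex to its pendant leaf (`1 + x_i + x`). Encoding a vertex set by the centre
bit and one triple of bits per branch turns both cases into a product over the branches.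
-/

open scoped Classical

/-- The leafy star `L_n` on `3n+1` vertices: vertex `none` is the centre; for each
`i : Fin n`, `some (i, 0)` is the `i`-th (free, coloured) middle vertex, `some (i, 1)` is
the pendant leaf attached to that middle vertex, and `some (i, 2)` is a leaf attached
to the centre. -/
def leafyStar (n : ℕ) : SimpleGraph (Option (Fin n × Fin 3)) :=
  SimpleGraph.fromRel (fun u v =>
    (∃ i : Fin n, u = none ∧ (v = some (i, 0) ∨ v = some (i, 2))) ∨
    (∃ i : Fin n, u = some (i, 0) ∧ v = some (i, 1)))

/-- An independent set in a simple graph. -/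
def IsIndep {V : Type*} (G : SimpleGraph V) (S : Set V) : Prop :=
  S.Pairwise fun u v => ¬ G.Adj u v

open Finset

theorem isIndep_fromRel_iff {V : Type*} {r : V → V → Prop} {S : Set V} :
    IsIndep (SimpleGraph.fromRel r) S ↔ ∀ u ∈ S, ∀ v ∈ S, u ≠ v → ¬ r u v := by
  simp only [IsIndep, Set.Pairwise, SimpleGraph.fromRel_adj]
  exact ⟨fun h u hu v hv huv huv' => h hu hv huv ⟨huv, .inl huv'⟩,
    fun h u hu v hv huv ⟨_, h'⟩ => h'.elim (h u hu v hv huv) (h v hv u hu huv.symm)⟩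

theorem isIndep_leafyStar_iff {n : ℕ} {S : Set (Option (Fin n × Fin 3))} :
    IsIndep (leafyStar n) S ↔ ∀ i, (none ∈ S → some (i, 0) ∉ S ∧ some (i, 2) ∉ S) ∧
      (some (i, 0) ∈ S → some (i, 1) ∉ S) := by
  rw [leafyStar, isIndep_fromRel_iff]
  constructor
  · intro h i
    exact ⟨fun hc => ⟨fun hm => h _ hc _ hm (by simp) (.inl ⟨i, rfl, .inl rfl⟩),
      fun hl => h _ hc _ hl (by simp) (.inl ⟨i, rfl, .inr rfl⟩)⟩,
      fun hm hp => h _ hm _ hp (by simp) (.inr ⟨i, rfl, rfl⟩)⟩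
  · rintro h u hu v hv - (⟨i, rfl, rfl | rfl⟩ | ⟨i, rfl, rfl⟩)
    exacts [(h i).1 hu |>.1 hv, (h i).1 hu |>.2 hv, (h i).2 hu hv]

section Encoding

variable {ι : Type*} [Fintype ι]

def leafyStarIndicator (c : Bool) (g : ι → Bool × Bool × Bool) : Option (ι × Fin 3) → Bool
  | none => c
  | some (i, k) => ![(g i).1, (g i).2.1, (g i).2.2] k

def leafyStarFinset (c : Bool) (g : ι → Bool × Bool × Bool) : Finset (Option (ι × Fin 3)) :=
  univ.filter fun v => leafyStarIndicator c g v

@[simp] theorem none_mem_leafyStarFinset {c : Bool} {g : ι → Bool × Bool × Bool} :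
    none ∈ leafyStarFinset c g ↔ c = true := by
  simp only [leafyStarFinset, mem_filter, mem_univ, true_and]; rfl

@[simp] theorem some_mem_leafyStarFinset {c : Bool} {g : ι → Bool × Bool × Bool} {i : ι}
    {k : Fin 3} :
    some (i, k) ∈ leafyStarFinset c g ↔ ![(g i).1, (g i).2.1, (g i).2.2] k = true := by
  simp only [leafyStarFinset, mem_filter, mem_univ, true_and]; rfl

noncomputable def leafyStarFinsetEquiv :
    Bool × (ι → Bool × Bool × Bool) ≃ Finset (Option (ι × Fin 3)) where
  toFun p := leafyStarFinset p.1 p.2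
  invFun S := (none ∈ S, fun i => (some (i, 0) ∈ S, some (i, 1) ∈ S, some (i, 2) ∈ S))
  left_inv p := by simp
  right_inv S := by
    ext (_ | ⟨i, k⟩)
    · simp
    · fin_cases k <;> simp

theorem prod_leafyStarFinset {M : Type*} [CommMonoid M] (c : Bool) (g : ι → Bool × Bool × Bool)
    (w : Option (ι × Fin 3) → M) :
    ∏ v ∈ leafyStarFinset c g, w v = (if c then w none else 1) * ∏ i,
      (if (g i).1 then w (some (i, 0)) else 1) * (if (g i).2.1 then w (some (i, 1)) else 1) *
        (if (g i).2.2 then w (some (i, 2)) else 1) := by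
  rw [leafyStarFinset, prod_filter, Fintype.prod_option, Fintype.prod_prod_type]
  simp only [Fin.prod_univ_three]
  rfl

end Encoding

/-- `c` records the centre, `t` the middle vertex, its pendant leaf and the centre's own leaf
of one branch. -/
def BranchAdmissible (c : Bool) (t : Bool × Bool × Bool) : Prop :=
  (c → t.1 = false ∧ t.2.2 = false) ∧ (t.1 → t.2.1 = false)

theorem isIndep_leafyStarFinset_iff {n : ℕ} {c : Bool} {g : Fin n → Bool × Bool × Bool} :
    IsIndep (leafyStar n) ↑(leafyStarFinset c g) ↔ ∀ i, BranchAdmissible c (g i) := by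
  simp [isIndep_leafyStar_iff, BranchAdmissible]

def leafyStarWeight {R : Type*} {n : ℕ} (x : R) (xs : Fin n → R) : Option (Fin n × Fin 3) → R
  | none => x
  | some (i, k) => if k = 0 then xs i else x

section Weights

variable {R : Type*} [CommSemiring R]

noncomputable def branchWeight (x y : R) (c : Bool) (t : Bool × Bool × Bool) : R :=
  if BranchAdmissible c t then
    (if t.1 then y else 1) * (if t.2.1 then x else 1) * (if t.2.2 then x else 1)
  else 0

theorem indepWeight_leafyStarFinset {n : ℕ} (x : R) (xs : Fin n → R) (c : Bool)
    (g : Fin n → Bool × Bool × Bool) :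
    (if IsIndep (leafyStar n) ↑(leafyStarFinset c g) then
        ∏ v ∈ leafyStarFinset c g, leafyStarWeight x xs v else 0) =
      (if c then x else 1) * ∏ i, branchWeight x (xs i) c (g i) := by
  rw [isIndep_leafyStarFinset_iff, prod_leafyStarFinset]
  by_cases h : ∀ i, BranchAdmissible c (g i)
  · rw [if_pos h]
    exact congrArg _ (prod_congr rfl fun i _ => (if_pos (h i)).symm)
  · obtain ⟨i, hi⟩ := not_forall.1 h
    rw [if_neg h, prod_eq_zero (mem_univ i) (if_neg hi), mul_zero]

theorem sum_branchWeight_true (x y : R) : ∑ t, branchWeight x y true t = x + 1 := by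
  simp [branchWeight, BranchAdmissible, Fintype.sum_prod_type]

theorem sum_branchWeight_false (x y : R) :
    ∑ t, branchWeight x y false t = (x + 1) * (x + y + 1) := by
  simp [branchWeight, BranchAdmissible, Fintype.sum_prod_type]
  ring

end Weights

theorem colouredIndepPoly_leafyStar (n : ℕ) (x : ℝ) (xs : Fin n → ℝ) :
    (∑ S : Finset (Option (Fin n × Fin 3)),
        if IsIndep (leafyStar n) ↑S then
          ∏ v ∈ S, (match v with
            | some (i, ⟨0, _⟩) => xs i
            | _ => x)
        else 0)
      = (x + 1) ^ n * (x + ∏ i : Fin n, (x + xs i + 1)) := by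
  calc _ = ∑ S : Finset (Option (Fin n × Fin 3)),
        (if IsIndep (leafyStar n) ↑S then ∏ v ∈ S, leafyStarWeight x xs v else 0) := by
        refine sum_congr rfl fun S _ => if_congr Iff.rfl (prod_congr rfl fun v _ => ?_) rfl
        rcases v with _ | ⟨i, _ | k, hk⟩
        · rfl
        · rfl
        · simp [leafyStarWeight, Fin.ext_iff]
    _ = ∑ p : Bool × (Fin n → Bool × Bool × Bool),
        (if p.1 then x else 1) * ∏ i, branchWeight x (xs i) p.1 (p.2 i) :=
      (Fintype.sum_bijective leafyStarFinsetEquiv leafyStarFinsetEquiv.bijective _ _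
        fun p => (indepWeight_leafyStarFinset x xs p.1 p.2).symm).symm
    _ = _ := by
      rw [Fintype.sum_prod_type, Fintype.sum_bool]
      simp only [Bool.false_eq_true, if_true, if_false, one_mul, ← mul_sum, ← Fintype.prod_sum,
        sum_branchWeight_true, sum_branchWeight_false, prod_const, prod_mul_distrib, card_univ,
        Fintype.card_fin]
      ring
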